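/- arXiv:2411.13043 — 3 statements merged into one kernel-verified Lean document; each statement's English description precedes it below -/
import Mathlib

section
/- Let k ≥ 1 and n ≥ 4k. Let A_i = {4i−3, 4i−2, 4i−1, 4i} for 1 ≤ i ≤ k. Then the number of involutions w of S_n for which there exist indices 1 ≤ i < j ≤ k with w(A_i) ∩ A_j ≠ ∅ is at most 16 · (k choose 2) · i_{n−2}, where i_m denotes the number of involutions in the symmetric group S_m. -/
/-! An involution `w` with `w(A_i) ∩ A_j ≠ ∅` satisfies `w a = b` for one of at most
`16 · (k choose 2)` ordered pairs `(a, b)` lying in blocks `A_i`, `A_j` with `i < j`. For fixed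
`a ≠ b`, such a `w` swaps `a` and `b`, so it is determined by its restriction to the other
`n - 2` points, which is again an involution. A union bound over the pairs finishes the proof. -/

/-- `invCount m` is the number of involutions in the symmetric group `S_m`
(permutations `w` with `w ∘ w = id`, including the identity). -/
def invCount (m : ℕ) : ℕ :=
  (Finset.univ.filter fun w : Equiv.Perm (Fin m) => w * w = 1).card

open Finset Equiv

namespace Equiv.Perm

variable {α : Type*} {w : Perm α}

theorem apply_apply_of_mul_self_eq_one (hw : w * w = 1) (x : α) : w (w x) = x := by
  simpa using congr($hw x)

theorem apply_eq_of_mul_self_eq_one (hw : w * w = 1) {a b : α} (hab : w a = b) : w b = a :=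
  hab ▸ apply_apply_of_mul_self_eq_one hw a

end Equiv.Perm

section Involutions

variable {α β : Type*} [Fintype α] [DecidableEq α] [Fintype β] [DecidableEq β]

theorem card_involutions_congr (e : α ≃ β) :
    #{w : Perm α | w * w = 1} = #{w : Perm β | w * w = 1} :=
  card_equiv e.permCongrHom.toEquiv fun w => by
    simp only [mem_filter, mem_univ, true_and, MulEquiv.toEquiv_eq_coe, EquivLike.coe_coe,
      ← map_mul, MulEquiv.map_eq_one_iff]

theorem invCount_eq_card_involutions {m : ℕ} (h : Fintype.card α = m) :
    invCount m = #{w : Perm α | w * w = 1} :=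
  card_involutions_congr (Fintype.equivFinOfCardEq h).symm

theorem card_involutions_apply_eq_le {a b : α} :
    #{w : Perm α | w * w = 1 ∧ w a = b} ≤ #{σ : Perm {x // x ≠ a ∧ x ≠ b} | σ * σ = 1} := by
  simp only [← Fintype.card_subtype]
  have hinv {w : Perm α} (hw : w * w = 1) (hwa : w a = b) (x : α) :
      (w x ≠ a ∧ w x ≠ b) ↔ (x ≠ a ∧ x ≠ b) := by
    have hwb := w.apply_eq_of_mul_self_eq_one hw hwa
    rw [← hwa, ← hwb, w.injective.ne_iff, w.injective.ne_iff, hwb, hwa, and_comm]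
  refine Fintype.card_le_of_injective
    (fun w => ⟨w.1.subtypePerm (hinv w.2.1 w.2.2), ?_⟩) fun w w' h => ?_
  · ext x
    simp [w.1.apply_apply_of_mul_self_eq_one w.2.1]
  · have hres := congr_arg Subtype.val h
    ext x
    by_cases hxa : x = a
    · rw [hxa, w.2.2, w'.2.2]
    by_cases hxb : x = b
    · rw [hxb, w.1.apply_eq_of_mul_self_eq_one w.2.1 w.2.2,
        w'.1.apply_eq_of_mul_self_eq_one w'.2.1 w'.2.2]
    simpa using congr($hres ⟨x, hxa, hxb⟩)

theorem card_involutions_apply_eq_le_invCount {a b : α} (hab : a ≠ b) :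
    #{w : Perm α | w * w = 1 ∧ w a = b} ≤ invCount (Fintype.card α - 2) := by
  refine card_involutions_apply_eq_le.trans_eq (invCount_eq_card_involutions ?_).symm
  rw [Fintype.card_subtype, ← card_pair hab, ← card_compl]
  congr 1
  ext x
  simp

end Involutions

def blockPairs (n m k : ℕ) : Finset (Fin n × Fin n) :=
  {p | p.1.val / m < p.2.val / m ∧ p.2.val / m < k}

theorem card_blockPairs_le (n m k : ℕ) : #(blockPairs n m k) ≤ m ^ 2 * k.choose 2 := by
  calc _ ≤ #({x ∈ range k ×ˢ range k | x.1 < x.2} ×ˢ (range m ×ˢ range m)) := by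
        refine card_le_card_of_injOn
          (fun p => ((p.1.val / m, p.2.val / m), (p.1.val % m, p.2.val % m))) ?_ ?_
        · intro p hp
          simp only [blockPairs, mem_coe, mem_filter, mem_univ, true_and] at hp
          have hm : 0 < m := Nat.pos_of_ne_zero fun h => by simp [h] at hp
          simp only [mem_coe, mem_product, mem_filter, mem_range]
          exact ⟨⟨⟨hp.1.trans hp.2, hp.2⟩, hp.1⟩, Nat.mod_lt _ hm, Nat.mod_lt _ hm⟩
        · rintro ⟨a, b⟩ - ⟨a', b'⟩ - h
          simp only [Prod.mk.injEq] at h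
          obtain ⟨⟨ha, hb⟩, ha', hb'⟩ := h
          exact Prod.ext (Fin.ext (Nat.ext_div_mod ha ha')) (Fin.ext (Nat.ext_div_mod hb hb'))
    _ = m ^ 2 * k.choose 2 := by
        simp only [card_product, card_product_filter_lt, card_range]
        ring

theorem stmt4_general (k n : ℕ) :
    (Finset.univ.filter fun w : Equiv.Perm (Fin n) =>
      w * w = 1 ∧ ∃ i < k, ∃ j < k, i < j ∧ ∃ a : Fin n,
        a.val ∈ ({4 * i, 4 * i + 1, 4 * i + 2, 4 * i + 3} : Finset ℕ) ∧
        (w a).val ∈ ({4 * j, 4 * j + 1, 4 * j + 2, 4 * j + 3} : Finset ℕ)).card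
    ≤ 16 * k.choose 2 * invCount (n - 2) := by
  calc _ ≤ #((blockPairs n 4 k).biUnion fun p =>
          {w : Perm (Fin n) | w * w = 1 ∧ w p.1 = p.2}) := by
        refine card_le_card fun w hw => ?_
        simp only [mem_filter, mem_univ, true_and, mem_insert, mem_singleton] at hw
        obtain ⟨hw, i, -, j, hj, hij, a, ha, hwa⟩ := hw
        simp only [mem_biUnion, mem_filter, mem_univ, true_and, blockPairs]
        refine ⟨(a, w a), ?_, hw, rfl⟩
        dsimp only
        omega
    _ ≤ #(blockPairs n 4 k) * invCount (n - 2) :=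
        card_biUnion_le_card_mul _ _ _ fun p hp => by
          simpa using card_involutions_apply_eq_le_invCount (a := p.1) (b := p.2)
            fun h => by simp [blockPairs, h] at hp
    _ ≤ 16 * k.choose 2 * invCount (n - 2) :=
        Nat.mul_le_mul_right _ (card_blockPairs_le n 4 k)

/-- For `k ≥ 1` and `n ≥ 4k`, with blocks `A_i = {4i-3,...,4i}` for
`1 ≤ i ≤ k` (0-based: `A_i = {4i, 4i+1, 4i+2, 4i+3}` for `0 ≤ i < k`), the number of
involutions `w` of `S_n` for which there exist `i < j` (both blocks) with
`w(A_i) ∩ A_j ≠ ∅` is at most `16 * (k choose 2) * i_{n-2}`. -/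
theorem stmt4 (k n : ℕ) (hk : 1 ≤ k) (hn : 4 * k ≤ n) :
    (Finset.univ.filter fun w : Equiv.Perm (Fin n) =>
      w * w = 1 ∧ ∃ i < k, ∃ j < k, i < j ∧ ∃ a : Fin n,
        a.val ∈ ({4 * i, 4 * i + 1, 4 * i + 2, 4 * i + 3} : Finset ℕ) ∧
        (w a).val ∈ ({4 * j, 4 * j + 1, 4 * j + 2, 4 * j + 3} : Finset ℕ)).card
    ≤ 16 * k.choose 2 * invCount (n - 2) :=
  stmt4_general k n
end

section
/- For each n ≥ 4, let k(n) be the unique positive integer k with 4k³ ≤ n < 4(k+1)³, let A_i = {4i−3, 4i−2, 4i−1, 4i} for 1 ≤ i ≤ k(n), and let Q_n be the set of involutions w of S_n such that w(A_i) ∩ A_j = ∅ for all 1 ≤ i < j ≤ k(n). Then |Q_n| / i_n → 1 as n → ∞, where i_n denotes the number of involutions in S_n. -/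
/-!
Call an involution `w` *bad* if it maps some point of a block `A_i` into a later block `A_j`.
For a fixed pair `a ≠ b`, conjugating the involutions with `w a = b` by the transpositions
`(b c)`, `c ≠ a`, gives `n - 1` times as many distinct involutions; so at most a fraction
`1 / (n - 1)` of all involutions send `a` to `b`. There are at most `(4k)²` pairs `(a, b)` with
`a` in an earlier block than `b`, so the bad involutions form a fraction at most
`16 k² / (n - 1) ≤ 16 / (3k)` of all involutions, since `4k³ ≤ n`; and `k → ∞`.
-/

open Finset Filter

namespace Equiv.Perm

variable {α : Type*} [Fintype α] [DecidableEq α]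

variable (α) in
def involutions : Finset (Perm α) := {w | w * w = 1}

theorem card_involutions_apply_eq_mul_le {a b : α} (hab : a ≠ b) :
    #{w ∈ involutions α | w a = b} * (Fintype.card α - 1) ≤ #(involutions α) := by
  have h := card_le_card_of_injOn (fun p : Perm α × α => swap b p.2 * p.1 * swap b p.2)
    (s := {w ∈ involutions α | w a = b} ×ˢ univ.erase a) (t := involutions α) ?_ ?_
  · simpa [card_erase_of_mem] using h
  · rintro ⟨w, c⟩ hwc
    simp only [involutions, mem_coe, mem_product, mem_filter, mem_univ, true_and] at hwc ⊢
    have hconj : swap b c * w * swap b c = MulAut.conj (swap b c) w := by simp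
    rw [hconj, ← map_mul, hwc.1.1, map_one]
  · rintro ⟨w, c⟩ hwc ⟨w', c'⟩ hwc' heq
    simp only [involutions, mem_coe, mem_product, mem_filter, mem_univ, true_and, mem_erase]
      at hwc hwc'
    -- the image sends `a` to `c`, which recovers `c`, and then `w` by cancelling the swaps
    have hc : c = c' := by
      simpa [swap_apply_of_ne_of_ne hab (Ne.symm hwc.2.1),
        swap_apply_of_ne_of_ne hab (Ne.symm hwc'.2.1), hwc.1.2, hwc'.1.2] using congrArg (· a) heq
    subst hc
    simpa using heq

theorem card_involutions_exists_apply_eq_mul_le (P : Finset (α × α)) (hP : ∀ p ∈ P, p.1 ≠ p.2) :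
    #{w ∈ involutions α | ∃ p ∈ P, w p.1 = p.2} * (Fintype.card α - 1) ≤
      #P * #(involutions α) := by
  have hsub : {w ∈ involutions α | ∃ p ∈ P, w p.1 = p.2} ⊆
      P.biUnion fun p => {w ∈ involutions α | w p.1 = p.2} := by
    intro w hw
    obtain ⟨hw, p, hp, hwp⟩ := mem_filter.1 hw
    exact mem_biUnion.2 ⟨p, hp, mem_filter.2 ⟨hw, hwp⟩⟩
  calc #{w ∈ involutions α | ∃ p ∈ P, w p.1 = p.2} * (Fintype.card α - 1)
      ≤ (∑ p ∈ P, #{w ∈ involutions α | w p.1 = p.2}) * (Fintype.card α - 1) := by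
        gcongr
        exact (card_le_card hsub).trans card_biUnion_le
    _ = ∑ p ∈ P, #{w ∈ involutions α | w p.1 = p.2} * (Fintype.card α - 1) := sum_mul ..
    _ ≤ ∑ _p ∈ P, #(involutions α) :=
        sum_le_sum fun p hp => card_involutions_apply_eq_mul_le (hP p hp)
    _ = #P * #(involutions α) := by rw [sum_const, smul_eq_mul]

theorem one_sub_div_le_card_avoiding_div (P : Finset (α × α)) (hP : ∀ p ∈ P, p.1 ≠ p.2)
    (hα : 1 < Fintype.card α) :
    1 - (#P : ℝ) / (Fintype.card α - 1 : ℕ) ≤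
      (#{w : Perm α | w * w = 1 ∧ ∀ p ∈ P, w p.1 ≠ p.2} : ℝ) / #(involutions α) := by
  set bad := {w ∈ involutions α | ∃ p ∈ P, w p.1 = p.2}
  have hsplit : #{w : Perm α | w * w = 1 ∧ ∀ p ∈ P, w p.1 ≠ p.2} + #bad = #(involutions α) := by
    rw [← card_filter_add_card_filter_not (s := involutions α)
      (fun w : Perm α => ∀ p ∈ P, w p.1 ≠ p.2), involutions, filter_filter]
    simp only [bad, involutions, not_forall, not_not, exists_prop]
  have hpos : (0 : ℝ) < #(involutions α) := by
    exact_mod_cast card_pos.2 ⟨1, by simp [involutions]⟩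
  have hbad : (#bad : ℝ) / #(involutions α) ≤ #P / (Fintype.card α - 1 : ℕ) := by
    rw [div_le_div_iff₀ hpos (by simp [hα])]
    exact_mod_cast card_involutions_exists_apply_eq_mul_le P hP
  rw [← Nat.cast_inj (R := ℝ), Nat.cast_add] at hsplit
  rw [eq_sub_of_add_eq hsplit, sub_div, div_self hpos.ne']
  linarith

theorem card_avoiding_div_le_one (P : Finset (α × α)) :
    (#{w : Perm α | w * w = 1 ∧ ∀ p ∈ P, w p.1 ≠ p.2} : ℝ) / #(involutions α) ≤ 1 :=
  div_le_one_of_le₀ (by gcongr; exact monotone_filter_right _ fun _ _ hw => hw.1) (by positivity)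

end Equiv.Perm

open Equiv.Perm

-- `x / 4` is the index `i` of the block `{4i, 4i + 1, 4i + 2, 4i + 3}` containing `x`.
def crossingPairs (n k : ℕ) : Finset (Fin n × Fin n) :=
  {p | p.1.val / 4 < p.2.val / 4 ∧ p.2.val / 4 < k}

theorem card_crossingPairs_le (n k : ℕ) : #(crossingPairs n k) ≤ 16 * k ^ 2 := by
  have h := card_le_card_of_injOn (fun p : Fin n × Fin n => (p.1.val, p.2.val))
    (s := crossingPairs n k) (t := range (4 * k) ×ˢ range (4 * k))
    (fun p hp => by simp [crossingPairs] at hp ⊢; omega)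
    (Fin.val_injective.prodMap Fin.val_injective).injOn
  simpa [card_product, ← sq, mul_pow] using h

theorem card_crossingPairs_div_le {n k : ℕ} (hk : 1 ≤ k) (hkn : 4 * k ^ 3 ≤ n) :
    (#(crossingPairs n k) : ℝ) / (n - 1 : ℕ) ≤ 16 / (3 * k) := by
  have hk3 : 1 ≤ k ^ 3 := Nat.one_le_pow _ _ hk
  have hcard : #(crossingPairs n k) * (3 * k) ≤ 16 * (n - 1) :=
    calc #(crossingPairs n k) * (3 * k) ≤ 16 * k ^ 2 * (3 * k) := by
          gcongr; exact card_crossingPairs_le n k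
      _ = 16 * (3 * k ^ 3) := by ring
      _ ≤ 16 * (n - 1) := by omega
  rw [div_le_div_iff₀ (by simp; omega) (by positivity)]
  exact_mod_cast hcard

theorem mem_block_iff {x i : ℕ} :
    x ∈ ({4 * i, 4 * i + 1, 4 * i + 2, 4 * i + 3} : Finset ℕ) ↔ x / 4 = i := by
  simp only [mem_insert, mem_singleton]
  omega

theorem block_condition_iff {n k : ℕ} (w : Equiv.Perm (Fin n)) :
    (∀ j < k, ∀ i < j, ∀ a : Fin n,
      a.val ∈ ({4 * i, 4 * i + 1, 4 * i + 2, 4 * i + 3} : Finset ℕ) →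
        (w a).val ∉ ({4 * j, 4 * j + 1, 4 * j + 2, 4 * j + 3} : Finset ℕ)) ↔
    ∀ p ∈ crossingPairs n k, w p.1 ≠ p.2 := by
  simp only [mem_block_iff, crossingPairs, mem_filter, mem_univ, true_and]
  constructor
  · rintro h p ⟨hp, hpk⟩ hwp
    exact h _ hpk _ hp p.1 rfl (by rw [hwp])
  · rintro h j hj i hij a rfl hwa
    exact h (a, w a) ⟨hwa ▸ hij, hwa ▸ hj⟩ rfl

/-- For `n ≥ 4`, let `K n` be the unique positive integer `k` with
`4k³ ≤ n < 4(k+1)³`. With blocks `A_i = {4i-3,...,4i}` for `1 ≤ i ≤ K n`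
(0-based: `A_i = {4i,...,4i+3}` for `0 ≤ i < K n`), let `Q_n` be the set of involutions
`w` of `S_n` with `w(A_i) ∩ A_j = ∅` for all `i < j`. Then `|Q_n| / i_n → 1` as
`n → ∞`. -/
theorem stmt6 (K : ℕ → ℕ)
    (hK : ∀ n, 4 ≤ n → 1 ≤ K n ∧ 4 * (K n) ^ 3 ≤ n ∧ n < 4 * (K n + 1) ^ 3) :
    Filter.Tendsto (fun n : ℕ =>
      ((Finset.univ.filter fun w : Equiv.Perm (Fin n) =>
        w * w = 1 ∧ ∀ j < K n, ∀ i < j,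
          ∀ a : Fin n, a.val ∈ ({4 * i, 4 * i + 1, 4 * i + 2, 4 * i + 3} : Finset ℕ) →
            (w a).val ∉ ({4 * j, 4 * j + 1, 4 * j + 2, 4 * j + 3} : Finset ℕ)).card : ℝ)
      / (invCount n : ℝ))
      Filter.atTop (nhds 1) := by
  have hK_tendsto : Tendsto K atTop atTop := by
    refine tendsto_atTop_atTop.2 fun M => ⟨4 * M ^ 3 + 4, fun n hn => ?_⟩
    obtain ⟨-, -, hn'⟩ := hK n (by omega)
    by_contra! hM
    have := Nat.pow_le_pow_left (show K n + 1 ≤ M by omega) 3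
    omega
  have hlower : Tendsto (fun n => 1 - 16 / (3 * (K n : ℝ))) atTop (nhds 1) := by
    simpa using tendsto_const_nhds.sub <| tendsto_const_nhds.div_atTop <|
      (tendsto_natCast_atTop_atTop.comp hK_tendsto).const_mul_atTop (by norm_num : (0 : ℝ) < 3)
  simp_rw [block_condition_iff]
  refine tendsto_of_tendsto_of_tendsto_of_le_of_le' hlower tendsto_const_nhds ?_
    (Eventually.of_forall fun n => card_avoiding_div_le_one _)
  filter_upwards [eventually_ge_atTop 4] with n hn
  obtain ⟨hk, hkn, -⟩ := hK n hn
  have hbound := one_sub_div_le_card_avoiding_div (crossingPairs n (K n))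
    (fun p hp => Fin.ne_of_val_ne (by simp [crossingPairs] at hp; omega)) (by simp; omega)
  rw [Fintype.card_fin] at hbound
  exact (sub_le_sub_left (card_crossingPairs_div_le hk hkn) 1).trans hbound
end

section
/- Let k ≥ 1 and n ≥ 4k. Let A_i = {4i−3, 4i−2, 4i−1, 4i} for 1 ≤ i ≤ k, and let Q_{n,k} be the set of involutions w of S_n such that w(A_i) ∩ A_j = ∅ for all 1 ≤ i < j ≤ k. Then the number of w ∈ Q_{n,k} such that for every i with 1 ≤ i ≤ k the inequality chain w(4i−2) < w(4i−3) < w(4i) < w(4i−1) fails, is at most (23/24)^k · |Q_{n,k}|. -/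
/-!
Fix a block `A = A_j` and call two members of `Q_{n,k}` equivalent when they agree away from `A`,
i.e. outside `A` and the set `B` of points they send into `A` (`offBlock`). An equivalence class
consists of the ways of pairing every point of `B` with a point of `A` and the remaining points of
`A` among themselves, so it has at most `4! = 24` members; and since `|B| ≤ 4`, one of them has
the pattern `2143` at `A` (a finite check over the relative positions of `B` and `A`). The classes
do not see the patterns at the other blocks, so forbidding the pattern at `A` keeps at most `23/24`
of each class, and doing this for `j = 1, …, k` in turn gives the bound.
-/

/-- `Qset n k` is the set of involutions `w` of `S_n` (permutations with `w ∘ w = id`)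
such that `w(A_i) ∩ A_j = ∅` for all `1 ≤ i < j ≤ k`, where the blocks
`A_i = {4i-3,...,4i}` for `1 ≤ i ≤ k` are written 0-based as
`A_i = {4i, 4i+1, 4i+2, 4i+3}` for `0 ≤ i < k`. -/
def Qset (n k : ℕ) : Finset (Equiv.Perm (Fin n)) :=
  Finset.univ.filter fun w =>
    w * w = 1 ∧ ∀ j < k, ∀ i < j,
      ∀ a : Fin n, a.val ∈ ({4 * i, 4 * i + 1, 4 * i + 2, 4 * i + 3} : Finset ℕ) →
        (w a).val ∉ ({4 * j, 4 * j + 1, 4 * j + 2, 4 * j + 3} : Finset ℕ)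

open Finset Equiv Nat

section Matchings

variable {α : Type*} [DecidableEq α]

def MatchesInto (A B : Finset α) (f : α → α) (w : Perm α) : Prop :=
  (∀ x ∉ A ∪ B, w x = f x) ∧ ∀ b ∈ B, w b ∈ A ∧ w (w b) = b

instance [Fintype α] (A B : Finset α) (f : α → α) : DecidablePred (MatchesInto A B f) :=
  fun _ => by unfold MatchesInto; infer_instance

theorem card_perm_eqOn_compl_le [Fintype α] (A : Finset α) (f : α → α) :
    #{w : Perm α | ∀ x ∉ A, w x = f x} ≤ (#A)! := by
  obtain h | ⟨w₁, hw₁⟩ := eq_empty_or_nonempty ({w : Perm α | ∀ x ∉ A, w x = f x} : Finset _)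
  · simp [h]
  rw [← card_perms_of_finset]
  refine card_le_card_of_injOn (w₁⁻¹ * ·) (fun w hw => ?_) fun w _ w' _ h => mul_left_cancel h
  simp only [coe_filter, mem_filter, mem_univ, true_and, Set.mem_ofPred_eq] at hw hw₁
  rw [mem_coe, mem_perms_of_finset_iff]
  intro x hx
  by_contra hxA
  exact hx (by rw [Perm.mul_apply, hw x hxA, ← hw₁ x hxA]; simp)

/-- Undoing the transposition that pairs `b` with `w b` frees both points, which then join the
part where the permutation is prescribed. -/
theorem MatchesInto.mul_swap {A B : Finset α} {f : α → α} {w : Perm α} {b : α}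
    (hbB : b ∉ B) (hAB : Disjoint A (insert b B)) (hw : MatchesInto A (insert b B) f w) :
    MatchesInto (A.erase (w b)) B (Function.update (Function.update f (w b) (w b)) b b)
      (w * swap (w b) b) := by
  have hbA : b ∉ A := disjoint_right.1 hAB (mem_insert_self b B)
  obtain ⟨hf, hB⟩ := hw
  simp only [forall_mem_insert] at hB
  obtain ⟨⟨hwb, hwwb⟩, hB⟩ := hB
  have hne : w b ≠ b := fun h => hbA (h ▸ hwb)
  refine ⟨fun x hx => ?_, fun b' hb' => ?_⟩
  · simp only [mem_union, mem_erase, not_or, not_and] at hx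
    by_cases hxb : x = b
    · subst hxb; simp [hwwb]
    by_cases hxa : x = w b
    · subst hxa; simp [hne]
    rw [Perm.mul_apply, swap_apply_of_ne_of_ne hxa hxb, Function.update_of_ne hxb,
      Function.update_of_ne hxa, hf x]
    simp only [mem_union, mem_insert, not_or]
    exact ⟨hx.1 hxa, hxb, hx.2⟩
  · have hb'b : b' ≠ b := fun h => hbB (h ▸ hb')
    have hb'A : b' ∉ A := disjoint_right.1 hAB (mem_insert_of_mem hb')
    obtain ⟨hwb', hwwb'⟩ := hB b' hb'
    have h1 : w b' ≠ w b := fun h => hb'b (w.injective h)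
    have h2 : w b' ≠ b := fun h => hbA (h ▸ hwb')
    rw [Perm.mul_apply, swap_apply_of_ne_of_ne (fun h => hb'A (by rw [h]; exact hwb)) hb'b,
      Perm.mul_apply, swap_apply_of_ne_of_ne h1 h2]
    exact ⟨mem_erase.2 ⟨h1, hwb'⟩, hwwb'⟩

theorem card_matchesInto_le [Fintype α] (A B : Finset α) (hAB : Disjoint A B) (f : α → α) :
    #{w | MatchesInto A B f w} ≤ (#A)! := by
  induction B using Finset.induction_on generalizing A f with
  | empty => simpa [MatchesInto] using card_perm_eqOn_compl_le A f
  | insert b B hbB ih =>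
    set F : α → Finset (Perm α) := fun a =>
      {w | MatchesInto (A.erase a) B (Function.update (Function.update f a a) b b) w}
    have hsub : ({w | MatchesInto A (insert b B) f w} : Finset _) ⊆
        A.biUnion fun a => (F a).image (· * swap a b) := fun w hw => by
      have hw := (mem_filter.1 hw).2
      refine mem_biUnion.2 ⟨w b, (hw.2 b (mem_insert_self b B)).1, mem_image.2 ?_⟩
      exact ⟨w * swap (w b) b, mem_filter.2 ⟨mem_univ _, hw.mul_swap hbB hAB⟩,
        mul_swap_mul_self _ _ _⟩
    have hAB' : Disjoint A B := disjoint_of_subset_right (subset_insert b B) hAB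
    calc _ ≤ #(A.biUnion fun a => (F a).image (· * swap a b)) := card_le_card hsub
      _ ≤ ∑ a ∈ A, #((F a).image (· * swap a b)) := card_biUnion_le
      _ ≤ ∑ a ∈ A, (#A - 1)! := sum_le_sum fun a ha => Finset.card_image_le.trans <| by
          simpa [F, card_erase_of_mem ha] using
            ih (A.erase a) (disjoint_of_subset_left (erase_subset a A) hAB') _
      _ ≤ (#A)! := by
          rw [sum_const, smul_eq_mul]
          rcases Nat.eq_zero_or_pos #A with h | h
          · simp [h]
          · rw [Nat.mul_factorial_pred h.ne']

end Matchings

theorem card_filter_not_mul_le_of_fibers {ι κ : Type*} [DecidableEq κ] (s : Finset ι)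
    (D : ι → κ) (P : ι → Prop) [DecidablePred P] (N : ℕ)
    (hcard : ∀ y ∈ s, #{x ∈ s | D x = D y} ≤ N + 1)
    (hex : ∀ y ∈ s, ∃ x ∈ s, D x = D y ∧ P x) :
    (N + 1) * #{x ∈ s | ¬ P x} ≤ N * #s := by
  rw [card_eq_sum_card_image D s, card_eq_sum_card_fiberwise (f := D) (t := s.image D)
    fun x hx => mem_image_of_mem D (mem_filter.1 hx).1, mul_sum, mul_sum]
  refine sum_le_sum fun c hc => ?_
  obtain ⟨y, hy, rfl⟩ := mem_image.1 hc
  obtain ⟨x, hx, hxy, hPx⟩ := hex y hy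
  have hlt : #{z ∈ {x ∈ s | ¬ P x} | D z = D y} < #{z ∈ s | D z = D y} := by
    refine card_lt_card ⟨fun z hz => ?_, fun h => ?_⟩
    · simp only [mem_filter] at hz ⊢; exact ⟨hz.1.1, hz.2⟩
    · have := h (mem_filter.2 ⟨hx, hxy⟩)
      simp only [mem_filter] at this
      exact this.1.2 hPx
  have := hcard y hy
  nlinarith

theorem involutive_piecewise {α : Type*} [DecidableEq α] {S : Finset α} {f g : α → α}
    (hf : ∀ x ∈ S, f x ∈ S ∧ f (f x) = x) (hg : Function.Involutive g)
    (hgS : ∀ x ∈ S, g x ∈ S) : Function.Involutive (S.piecewise f g) := by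
  intro x
  by_cases hx : x ∈ S
  · rw [piecewise_eq_of_mem _ _ _ hx, piecewise_eq_of_mem _ _ _ (hf x hx).1, (hf x hx).2]
  · have hgx : g x ∉ S := fun h => hx (hg x ▸ hgS _ h)
    rw [piecewise_eq_of_notMem _ _ _ hx, piecewise_eq_of_notMem _ _ _ hgx, hg x]

theorem StrictMono.val_eq_succ_of_apply_eq_succ {t : ℕ} {f : Fin t → ℕ} (hf : StrictMono f)
    {i i' : Fin t} (h : f i' = f i + 1) : (i' : ℕ) = i + 1 := by
  have hlt : i < i' := hf.lt_iff_lt.1 (by omega)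
  by_contra hne
  have hmid : (i : ℕ) + 1 < t := by omega
  have h1 := hf (show i < ⟨i + 1, hmid⟩ from Fin.lt_def.2 (by simp))
  have h2 := hf (show (⟨i + 1, hmid⟩ : Fin t) < i' from Fin.lt_def.2 (by simp only; omega))
  omega

theorem OrderIso.exists_apply_add_of_forall_mem {n t c m : ℕ} {S : Finset (Fin n)}
    (e : Fin t ≃o S) (hm : 0 < m) (hc : c + m ≤ n)
    (hS : ∀ r (hr : r < m), (⟨c + r, by omega⟩ : Fin n) ∈ S) :
    ∃ l, ∃ hl : l + m ≤ t,
      ∀ r (hr : r < m), (e ⟨l + r, by omega⟩ : Fin n) = ⟨c + r, by omega⟩ := by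
  let a (r : ℕ) (hr : r < m) : S := ⟨⟨c + r, by omega⟩, hS r hr⟩
  have hmono : StrictMono fun i => ((e i : Fin n) : ℕ) := fun i i' h => e.strictMono h
  have hidx : ∀ r (hr : r < m), (e.symm (a r hr) : ℕ) = e.symm (a 0 hm) + r := by
    intro r hr
    induction r with
    | zero => rfl
    | succ r ih =>
      rw [hmono.val_eq_succ_of_apply_eq_succ (i := e.symm (a r (by omega))) (by simp [a]; omega),
        ih (by omega), add_assoc]
  refine ⟨e.symm (a 0 hm), ?_, fun r hr => ?_⟩
  · have := (e.symm (a (m - 1) (by omega))).isLt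
    rw [hidx _ (by omega)] at this
    omega
  · rw [show (⟨c + r, _⟩ : Fin n) = a r hr from rfl, ← e.apply_symm_apply (a r hr)]
    exact congrArg (fun i => (e i : Fin n)) (Fin.ext (hidx r hr).symm)

/-- `Fin t` models a set `S` in which the block occupies the positions `l, …, l + 3`. -/
theorem exists_model_pattern {t l : ℕ} (hl : l + 4 ≤ t) (ht : t ≤ 8) :
    ∃ σ : Fin t → Fin t, (∀ i, σ (σ i) = i) ∧
      (∀ i : Fin t, (i : ℕ) < l ∨ l + 4 ≤ i → l ≤ (σ i : ℕ) ∧ (σ i : ℕ) < l + 4) ∧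
      σ ⟨l + 1, by omega⟩ < σ ⟨l, by omega⟩ ∧ σ ⟨l, by omega⟩ < σ ⟨l + 3, by omega⟩ ∧
      σ ⟨l + 3, by omega⟩ < σ ⟨l + 2, by omega⟩ := by
  have : l ≤ 4 := by omega
  interval_cases l <;> interval_cases t
  · exact ⟨![1, 0, 3, 2], by decide +revert⟩
  · exact ⟨![1, 0, 4, 3, 2], by decide +revert⟩
  · exact ⟨![1, 0, 5, 4, 3, 2], by decide +revert⟩
  · exact ⟨![4, 1, 6, 5, 0, 3, 2], by decide +revert⟩
  · exact ⟨![5, 4, 7, 6, 1, 0, 3, 2], by decide +revert⟩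
  · exact ⟨![2, 1, 0, 4, 3], by decide +revert⟩
  · exact ⟨![2, 1, 0, 5, 4, 3], by decide +revert⟩
  · exact ⟨![2, 1, 0, 6, 5, 4, 3], by decide +revert⟩
  · exact ⟨![2, 5, 0, 7, 6, 1, 4, 3], by decide +revert⟩
  · exact ⟨![3, 2, 1, 0, 5, 4], by decide +revert⟩
  · exact ⟨![3, 2, 1, 0, 6, 5, 4], by decide +revert⟩
  · exact ⟨![3, 2, 1, 0, 7, 6, 5, 4], by decide +revert⟩
  · exact ⟨![4, 3, 6, 1, 0, 5, 2], by decide +revert⟩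
  · exact ⟨![4, 3, 6, 1, 0, 7, 2, 5], by decide +revert⟩
  · exact ⟨![5, 4, 7, 6, 1, 0, 3, 2], by decide +revert⟩

theorem exists_involution_pattern_on {n : ℕ} (S : Finset (Fin n)) (c : ℕ) (hc : c + 4 ≤ n)
    (hblock : ∀ r (hr : r < 4), (⟨c + r, by omega⟩ : Fin n) ∈ S) (hcard : #S ≤ 8) :
    ∃ τ : Fin n → Fin n, (∀ x ∈ S, τ x ∈ S ∧ τ (τ x) = x) ∧
      (∀ x ∈ S, (x : ℕ) < c ∨ c + 4 ≤ x → c ≤ (τ x : ℕ) ∧ (τ x : ℕ) < c + 4) ∧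
      τ ⟨c + 1, by omega⟩ < τ ⟨c, by omega⟩ ∧ τ ⟨c, by omega⟩ < τ ⟨c + 3, by omega⟩ ∧
      τ ⟨c + 3, by omega⟩ < τ ⟨c + 2, by omega⟩ := by
  obtain ⟨t, e, ht⟩ : ∃ t, ∃ _ : Fin t ≃o S, t ≤ 8 := ⟨_, S.orderIsoOfFin rfl, hcard⟩
  obtain ⟨l, hl, he⟩ := e.exists_apply_add_of_forall_mem (by norm_num) hc hblock
  obtain ⟨σ, hσσ, hσout, hσpat⟩ := exists_model_pattern hl ht
  let τ (x : Fin n) : Fin n := if hx : x ∈ S then e (σ (e.symm ⟨x, hx⟩)) else x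
  have hτ : ∀ i, τ (e i) = e (σ i) := fun i => by simp [τ]
  have hS : ∀ x ∈ S, ∃ i, (e i : Fin n) = x := fun x hx => ⟨e.symm ⟨x, hx⟩, by simp⟩
  refine ⟨τ, fun x hx => ?_, fun x hx hout => ?_, ?_⟩
  · obtain ⟨i, rfl⟩ := hS x hx
    rw [hτ, hτ, hσσ]
    exact ⟨(e (σ i)).2, rfl⟩
  · obtain ⟨i, rfl⟩ := hS x hx
    have hi : (i : ℕ) < l ∨ l + 4 ≤ i := by
      by_contra! hin
      obtain ⟨r, hr, hir⟩ : ∃ r, ∃ hr : r < 4, i = ⟨l + r, by omega⟩ :=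
        ⟨i - l, by omega, by ext; simp; omega⟩
      rw [hir, he r hr] at hout
      simp at hout
      omega
    obtain ⟨h1, h2⟩ := hσout i hi
    obtain ⟨r, hr, hσi⟩ : ∃ r, ∃ hr : r < 4, σ i = ⟨l + r, by omega⟩ :=
      ⟨σ i - l, by omega, by ext; simp; omega⟩
    rw [hτ, hσi, he r hr]
    simp [hr]
  · have hpos : ∀ r (hr : r < 4), τ ⟨c + r, by omega⟩ = e (σ ⟨l + r, by omega⟩) :=
      fun r hr => by rw [← he r hr, hτ]
    have h0 := hpos 0 (by norm_num)
    simp only [add_zero] at h0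
    rw [h0, hpos 1 (by norm_num), hpos 2 (by norm_num), hpos 3 (by norm_num)]
    simp only [Subtype.coe_lt_coe, OrderIso.lt_iff_lt]
    exact hσpat

section Blocks

variable {n k j : ℕ}

theorem mem_Qset_iff {w : Perm (Fin n)} :
    w ∈ Qset n k ↔ w * w = 1 ∧
      ∀ x : Fin n, (x : ℕ) / 4 < k → (w x : ℕ) / 4 < k → (w x : ℕ) / 4 = x / 4 := by
  have hA : ∀ v i : ℕ, v ∈ ({4 * i, 4 * i + 1, 4 * i + 2, 4 * i + 3} : Finset ℕ) ↔ v / 4 = i := by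
    intro v i; simp only [mem_insert, mem_singleton]; omega
  simp only [Qset, mem_filter, mem_univ, true_and, hA, and_congr_right_iff]
  intro hw
  have hww : ∀ x, w (w x) = x := fun x => by rw [← Perm.mul_apply, hw, Perm.one_apply]
  constructor
  · intro h x hx hwx
    rcases lt_trichotomy ((x : ℕ) / 4) ((w x : ℕ) / 4) with hlt | heq | hgt
    · exact absurd rfl (h _ hwx _ hlt x rfl)
    · exact heq.symm
    · exact (h _ hx _ hgt (w x) rfl (by rw [hww])).elim
  · intro h j hj i hij a ha hwa
    have := h a (by omega) (by omega)
    omega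

theorem apply_apply_of_mem_Qset {w : Perm (Fin n)} (hw : w ∈ Qset n k) (x : Fin n) :
    w (w x) = x := by
  rw [← Perm.mul_apply, (mem_Qset_iff.1 hw).1, Perm.one_apply]

def blockFinset (n j : ℕ) : Finset (Fin n) := {x | (x : ℕ) / 4 = j}

theorem card_blockFinset_le : #(blockFinset n j) ≤ 4 :=
  calc #(blockFinset n j) ≤ #(Ico (4 * j) (4 * j + 4)) :=
        card_le_card_of_injOn Fin.val (fun x hx => by
          simp only [blockFinset, coe_filter, mem_univ, true_and, Set.mem_ofPred_eq, coe_Ico,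
            Set.mem_Ico] at hx ⊢
          omega) Fin.val_injective.injOn
    _ = 4 := by simp

def HasPattern (w : Perm (Fin n)) (j : ℕ) : Prop :=
  ∃ h : 4 * j + 3 < n, w ⟨4 * j + 1, by omega⟩ < w ⟨4 * j, by omega⟩ ∧
    w ⟨4 * j, by omega⟩ < w ⟨4 * j + 3, h⟩ ∧ w ⟨4 * j + 3, h⟩ < w ⟨4 * j + 2, by omega⟩

instance (w : Perm (Fin n)) (j : ℕ) : Decidable (HasPattern w j) := by
  unfold HasPattern; infer_instance

theorem hasPattern_congr {w w' : Perm (Fin n)} {i : ℕ}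
    (h : ∀ x : Fin n, (x : ℕ) / 4 = i → w x = w' x) : HasPattern w i ↔ HasPattern w' i := by
  refine exists_congr fun hi => ?_
  rw [h ⟨4 * i, by omega⟩ (by simp only; omega), h ⟨4 * i + 1, by omega⟩ (by simp only; omega),
    h ⟨4 * i + 2, by omega⟩ (by simp only; omega), h ⟨4 * i + 3, by omega⟩ (by simp only; omega)]

def offBlock (j : ℕ) (w : Perm (Fin n)) (x : Fin n) : Option (Fin n) :=
  if (x : ℕ) / 4 = j ∨ (w x : ℕ) / 4 = j then none else some (w x)

def partners (j : ℕ) (w : Perm (Fin n)) : Finset (Fin n) :=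
  {x | (x : ℕ) / 4 ≠ j ∧ (w x : ℕ) / 4 = j}

variable {w w₀ : Perm (Fin n)}

theorem apply_eq_of_offBlock_eq (hD : offBlock j w = offBlock j w₀) {x : Fin n}
    (hx : (x : ℕ) / 4 ≠ j) (hwx : (w₀ x : ℕ) / 4 ≠ j) : w x = w₀ x := by
  have := congrFun hD x
  simp only [offBlock, hx, hwx, or_self, if_false, false_or] at this
  split_ifs at this
  exact Option.some_injective _ this

theorem apply_mem_block_of_offBlock_eq (hD : offBlock j w = offBlock j w₀) {x : Fin n}
    (hx : x ∈ partners j w₀) : (w x : ℕ) / 4 = j := by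
  simp only [partners, mem_filter, mem_univ, true_and] at hx
  have := congrFun hD x
  simp only [offBlock, hx.1, hx.2, or_true, if_true, false_or] at this
  by_contra h
  simp [h] at this

theorem card_fiber_le : #{w ∈ Qset n k | offBlock j w = offBlock j w₀} ≤ 24 := by
  have hdisj : Disjoint (blockFinset n j) (partners j w₀) := disjoint_left.2 fun x hx hx' => by
    simp only [blockFinset, partners, mem_filter, mem_univ, true_and] at hx hx'
    exact hx'.1 hx
  refine (card_le_card fun w hw => ?_).trans
    ((card_matchesInto_le _ _ hdisj w₀).trans (Nat.factorial_le card_blockFinset_le))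
  simp only [mem_filter, mem_univ, true_and] at hw ⊢
  refine ⟨fun x hx => ?_, fun b hb => ⟨?_, apply_apply_of_mem_Qset hw.1 b⟩⟩
  · simp only [mem_union, blockFinset, partners, mem_filter, mem_univ, true_and,
      not_or, not_and_or, not_not] at hx
    exact apply_eq_of_offBlock_eq hw.2 hx.1 (by tauto)
  · simpa [blockFinset] using apply_mem_block_of_offBlock_eq hw.2 hb

theorem apply_eq_of_offBlock_eq_of_ne (hw₀ : w₀ ∈ Qset n k) (hD : offBlock j w = offBlock j w₀)
    (hj : j < k) {x : Fin n} (hx : (x : ℕ) / 4 < k) (hxj : (x : ℕ) / 4 ≠ j) : w x = w₀ x :=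
  apply_eq_of_offBlock_eq hD hxj fun h =>
    hxj ((mem_Qset_iff.1 hw₀).2 x hx (h ▸ hj) ▸ h)

theorem le_div_of_mem_partners (hw₀ : w₀ ∈ Qset n k) (hj : j < k) {x : Fin n}
    (hx : x ∈ partners j w₀) : k ≤ (x : ℕ) / 4 := by
  simp only [partners, mem_filter, mem_univ, true_and] at hx
  by_contra! h
  exact hx.1 ((mem_Qset_iff.1 hw₀).2 x h (hx.2 ▸ hj) ▸ hx.2)

theorem card_partners_le (hw₀ : w₀ ∈ Qset n k) : #(partners j w₀) ≤ 4 :=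
  calc #(partners j w₀) ≤ #((blockFinset n j).image w₀) := card_le_card fun x hx => by
        simp only [partners, mem_filter, mem_univ, true_and] at hx
        exact mem_image.2 ⟨w₀ x, by simp [blockFinset, hx.2], apply_apply_of_mem_Qset hw₀ x⟩
    _ ≤ 4 := card_image_le.trans card_blockFinset_le

theorem apply_mem_block_union_partners (hw₀ : w₀ ∈ Qset n k) {x : Fin n}
    (hx : x ∈ blockFinset n j ∪ partners j w₀) : w₀ x ∈ blockFinset n j ∪ partners j w₀ := by
  simp only [blockFinset, partners, mem_union, mem_filter, mem_univ, true_and,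
    apply_apply_of_mem_Qset hw₀] at hx ⊢
  tauto

theorem exists_mem_Qset_offBlock_eq (hw₀ : w₀ ∈ Qset n k) (hj : j < k) {τ : Fin n → Fin n}
    (hτ : ∀ x ∈ blockFinset n j ∪ partners j w₀,
      τ x ∈ blockFinset n j ∪ partners j w₀ ∧ τ (τ x) = x)
    (hτB : ∀ x ∈ partners j w₀, (τ x : ℕ) / 4 = j) :
    ∃ w ∈ Qset n k, offBlock j w = offBlock j w₀ ∧
      ∀ x ∈ blockFinset n j ∪ partners j w₀, w x = τ x := by
  set S := blockFinset n j ∪ partners j w₀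
  have hf := involutive_piecewise hτ (apply_apply_of_mem_Qset hw₀)
    fun x => apply_mem_block_union_partners hw₀
  have hfS : ∀ x ∉ S, S.piecewise τ w₀ x = w₀ x := fun x hx => piecewise_eq_of_notMem _ _ _ hx
  refine ⟨hf.toPerm, mem_Qset_iff.2 ⟨Perm.ext hf, fun x hx hfx => ?_⟩, funext fun x => ?_,
    fun x hx => piecewise_eq_of_mem _ _ _ hx⟩
  · simp only [Function.Involutive.coe_toPerm] at hfx ⊢
    by_cases hxS : x ∈ S
    · rw [piecewise_eq_of_mem _ _ _ hxS] at hfx ⊢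
      have hxB : x ∉ partners j w₀ := fun h => by have := le_div_of_mem_partners hw₀ hj h; omega
      have hτB' : τ x ∉ partners j w₀ := fun h => by
        have := le_div_of_mem_partners hw₀ hj h; omega
      have h1 := (hτ x hxS).1
      simp only [S, mem_union, hxB, hτB', or_false, blockFinset, mem_filter, mem_univ,
        true_and] at hxS h1
      omega
    · rw [hfS x hxS] at hfx ⊢
      exact (mem_Qset_iff.1 hw₀).2 x hx hfx
  · simp only [offBlock, Function.Involutive.coe_toPerm]
    by_cases hxA : (x : ℕ) / 4 = j
    · simp [hxA]
    by_cases hxB : x ∈ partners j w₀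
    · have hw₀x : (w₀ x : ℕ) / 4 = j := by
        simp only [partners, mem_filter, mem_univ, true_and] at hxB; exact hxB.2
      have hxS : x ∈ S := mem_union_right _ hxB
      simp only [piecewise_eq_of_mem _ _ _ hxS, hτB x hxB, hw₀x, or_true, if_true]
    · simp only [hfS x (by simp [S, blockFinset, hxA, hxB])]

theorem exists_hasPattern_offBlock_eq (hw₀ : w₀ ∈ Qset n k) (hj : j < k) (hn : 4 * k ≤ n) :
    ∃ w ∈ Qset n k, offBlock j w = offBlock j w₀ ∧ HasPattern w j := by
  obtain ⟨τ, hτS, hτB, hτpat⟩ := exists_involution_pattern_on (blockFinset n j ∪ partners j w₀)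
    (4 * j) (by omega) (fun r hr => mem_union_left _ (by simp [blockFinset]; omega))
    ((card_union_le _ _).trans (Nat.add_le_add card_blockFinset_le (card_partners_le hw₀)))
  obtain ⟨w, hwQ, hwD, hwτ⟩ := exists_mem_Qset_offBlock_eq hw₀ hj hτS fun x hx => by
    have hx' : (x : ℕ) / 4 ≠ j := by simp [partners] at hx; exact hx.1
    have := hτB x (mem_union_right _ hx) (by omega)
    omega
  have hblock : ∀ x : Fin n, (x : ℕ) / 4 = j → w x = τ x :=
    fun x hx => hwτ x (mem_union_left _ (by simp [blockFinset, hx]))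
  refine ⟨w, hwQ, hwD, by omega, ?_⟩
  rw [hblock ⟨4 * j, _⟩ (by simp only; omega),
    hblock ⟨4 * j + 1, _⟩ (by simp only; omega),
    hblock ⟨4 * j + 2, _⟩ (by simp only; omega),
    hblock ⟨4 * j + 3, _⟩ (by simp only; omega)]
  exact hτpat

end Blocks

def avoiders (n k j : ℕ) : Finset (Perm (Fin n)) :=
  {w ∈ Qset n k | ∀ i < j, ¬ HasPattern w i}

theorem card_avoiders_succ_le {n k j : ℕ} (hj : j < k) (hn : 4 * k ≤ n) :
    24 * #(avoiders n k (j + 1)) ≤ 23 * #(avoiders n k j) := by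
  have hsplit : avoiders n k (j + 1) = {w ∈ avoiders n k j | ¬ HasPattern w j} := by
    ext w
    simp only [avoiders, mem_filter, Nat.lt_succ_iff_lt_or_eq, or_imp, forall_and,
      forall_eq, and_assoc]
  rw [hsplit]
  refine card_filter_not_mul_le_of_fibers _ (offBlock j) _ 23 (fun y _ => ?_) fun y hy => ?_
  · exact (card_le_card (filter_subset_filter _ (filter_subset _ _))).trans card_fiber_le
  · obtain ⟨hyQ, hy⟩ := mem_filter.1 hy
    obtain ⟨w, hwQ, hwD, hwP⟩ := exists_hasPattern_offBlock_eq hyQ hj hn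
    refine ⟨w, mem_filter.2 ⟨hwQ, fun i hi => ?_⟩, hwD, hwP⟩
    rw [hasPattern_congr fun x hx =>
      apply_eq_of_offBlock_eq_of_ne hyQ hwD hj (by omega) (by omega)]
    exact hy i hi

theorem pow_mul_card_avoiders_le {n k : ℕ} (hn : 4 * k ≤ n) {j : ℕ} (hj : j ≤ k) :
    24 ^ j * #(avoiders n k j) ≤ 23 ^ j * #(Qset n k) := by
  induction j with
  | zero => simp [avoiders]
  | succ j ih =>
    calc 24 ^ (j + 1) * #(avoiders n k (j + 1))
        = 24 ^ j * (24 * #(avoiders n k (j + 1))) := by ring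
      _ ≤ 24 ^ j * (23 * #(avoiders n k j)) :=
        Nat.mul_le_mul_left _ (card_avoiders_succ_le (by omega) hn)
      _ = 23 * (24 ^ j * #(avoiders n k j)) := by ring
      _ ≤ 23 * (23 ^ j * #(Qset n k)) := Nat.mul_le_mul_left _ (ih (by omega))
      _ = 23 ^ (j + 1) * #(Qset n k) := by ring

/-- For `k ≥ 1` and `n ≥ 4k`, the number of `w ∈ Q_{n,k}` such that for
every block index `i` (0-based, `i < k`) the chain
`w(4i-2) < w(4i-3) < w(4i) < w(4i-1)` (0-based: `w(4i+1) < w(4i) < w(4i+3) < w(4i+2)`)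
fails, is at most `(23/24)^k * |Q_{n,k}|`. -/
theorem stmt9 (k n : ℕ) (hn : 4 * k ≤ n) :
    ((((Qset n k)).filter fun w =>
      ∀ i, ∀ hi : i < k,
        ¬ (w ⟨4 * i + 1, by omega⟩ < w ⟨4 * i, by omega⟩ ∧
           w ⟨4 * i, by omega⟩ < w ⟨4 * i + 3, by omega⟩ ∧
           w ⟨4 * i + 3, by omega⟩ < w ⟨4 * i + 2, by omega⟩)).card : ℝ)
    ≤ (23 / 24 : ℝ) ^ k * ((Qset n k).card : ℝ) := by
  have hset : ((Qset n k).filter fun w => ∀ i, ∀ hi : i < k,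
        ¬ (w ⟨4 * i + 1, by omega⟩ < w ⟨4 * i, by omega⟩ ∧
           w ⟨4 * i, by omega⟩ < w ⟨4 * i + 3, by omega⟩ ∧
           w ⟨4 * i + 3, by omega⟩ < w ⟨4 * i + 2, by omega⟩)) = avoiders n k k :=
    filter_congr fun w _ => forall₂_congr fun i hi =>
      not_congr ⟨fun h => ⟨by omega, h⟩, fun ⟨_, h⟩ => h⟩
  have hbound : ((24 ^ k * #(avoiders n k k) : ℕ) : ℝ) ≤ ((23 ^ k * #(Qset n k) : ℕ) : ℝ) :=
    Nat.cast_le.2 (pow_mul_card_avoiders_le hn le_rfl)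
  push_cast at hbound
  rw [hset, div_pow, div_mul_eq_mul_div, le_div_iff₀ (by positivity)]
  linarith
end
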